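/- arXiv:1408.5582 — 4 statements merged into one kernel-verified Lean document; each statement's English description precedes it below -/
import Mathlib

section
/- Let κ be an uncountable regular cardinal with κ^{<κ} = κ. The set of x ∈ 2^κ that are eventually constant with value 0 on a club (i.e., there is a club c ⊆ κ with x(i) = 0 for all i ∈ c) is non-meager in 2^κ; indeed it is not contained in any union of κ-many nowhere dense sets. -/
open Cardinal Set

/-- `c` is a club (closed unbounded set) in the ordinal `k`. -/
def IsClubIn (c : Set Ordinal) (k : Ordinal) : Prop :=
  c ⊆ Set.Iio k ∧
  (∀ l, l < k → Order.IsSuccLimit l → (∀ a < l, ∃ b ∈ c, a ≤ b ∧ b < l) → l ∈ c) ∧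
  (∀ a < k, ∃ b ∈ c, a ≤ b)

/-- The bounded topology on `2^κ`. -/
def boundedTop2 (κ : Cardinal) : TopologicalSpace (Ordinal → Bool) :=
  TopologicalSpace.generateFrom
    { U | ∃ a < κ.ord, ∃ s : Ordinal → Bool, U = { x | ∀ i < a, x i = s i } }

/-- Nowhere dense with respect to the bounded topology. -/
def Nwd2 (κ : Cardinal) (A : Set (Ordinal → Bool)) : Prop :=
  @interior _ (boundedTop2 κ) (@closure _ (boundedTop2 κ) A) = ∅


/-!
Build by recursion a continuous chain of conditions `(β i, s i)`, where `s i` matters only below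
`β i`: at stage `i + 1` put `0` at position `β i` and then extend so that the basic open set of the
new condition misses `X i`, which is possible since `X i` is nowhere dense; at limits take unions.
Regularity of `κ` keeps `β i < κ` for `i < κ`. The union `x` of the chain avoids every `X i` and
vanishes on `{β i | i < κ}`, which is club as the range of a normal function.
-/

open Order Topology

/-- The basic open set `[s ↾ a]`; only the values of `s` below `a` matter. -/
def basicOpen (a : Ordinal) (s : Ordinal → Bool) : Set (Ordinal → Bool) :=
  { x | ∀ i < a, x i = s i }

lemma basicOpen_anti {a b : Ordinal} (hab : a ≤ b) (s : Ordinal → Bool) :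
    basicOpen b s ⊆ basicOpen a s :=
  fun _ hx i hi => hx i (hi.trans_le hab)

lemma isOpen_basicOpen {κ : Cardinal} {a : Ordinal} (ha : a < κ.ord) (s : Ordinal → Bool) :
    IsOpen[boundedTop2 κ] (basicOpen a s) :=
  TopologicalSpace.isOpen_generateFrom_of_mem ⟨a, ha, s, rfl⟩

lemma exists_basicOpen_subset {κ : Cardinal} (hκ : κ ≠ 0) {V : Set (Ordinal → Bool)}
    (hV : IsOpen[boundedTop2 κ] V) {y : Ordinal → Bool} (hy : y ∈ V) :
    ∃ a < κ.ord, basicOpen a y ⊆ V := by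
  induction hV with
  | basic U hU =>
    obtain ⟨a, ha, s, rfl⟩ := hU
    exact ⟨a, ha, fun x hx i hi => (hx i hi).trans (hy i hi)⟩
  | univ => exact ⟨0, ord_pos.2 (pos_iff_ne_zero.2 hκ), subset_univ _⟩
  | inter U₁ U₂ _ _ ih₁ ih₂ =>
    obtain ⟨a₁, ha₁, hU₁⟩ := ih₁ hy.1
    obtain ⟨a₂, ha₂, hU₂⟩ := ih₂ hy.2
    exact ⟨max a₁ a₂, max_lt ha₁ ha₂, subset_inter
      ((basicOpen_anti (le_max_left _ _) y).trans hU₁)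
      ((basicOpen_anti (le_max_right _ _) y).trans hU₂)⟩
  | sUnion S _ ih =>
    obtain ⟨U, hU, hyU⟩ := hy
    obtain ⟨a, ha, hsub⟩ := ih U hU hyU
    exact ⟨a, ha, hsub.trans (subset_sUnion_of_mem hU)⟩

lemma Nwd2.exists_basicOpen_disjoint {κ : Cardinal} (hκ : κ ≠ 0) {A : Set (Ordinal → Bool)}
    (hA : Nwd2 κ A) {a : Ordinal} (ha : a < κ.ord) (s : Ordinal → Bool) :
    ∃ b, a ≤ b ∧ b < κ.ord ∧ ∃ t ∈ basicOpen a s, Disjoint (basicOpen b t) A := by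
  let : TopologicalSpace (Ordinal → Bool) := boundedTop2 κ
  have hnsub : ¬ basicOpen a s ⊆ closure A := fun hsub => by
    have hs : s ∈ interior (closure A) :=
      interior_maximal hsub (isOpen_basicOpen ha s) fun _ _ => rfl
    rwa [hA] at hs
  obtain ⟨t, hts, htA⟩ := not_subset.1 hnsub
  obtain ⟨b, hb, hsub⟩ := exists_basicOpen_subset hκ isClosed_closure.isOpen_compl htA
  refine ⟨max a b, le_max_left _ _, max_lt ha hb, t, hts, subset_compl_iff_disjoint_right.1 ?_⟩
  exact (basicOpen_anti (le_max_right _ _) t).trans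
    (hsub.trans (compl_subset_compl.2 subset_closure))

/-- Conditions of length `≥ κ` are merely lengthened, so that the step can be chosen as a total
function. -/
lemma Nwd2.exists_extension {κ : Cardinal} (hκ : ℵ₀ ≤ κ) {A : Set (Ordinal → Bool)}
    (hA : Nwd2 κ A) (p : Ordinal × (Ordinal → Bool)) :
    ∃ q : Ordinal × (Ordinal → Bool), (p.1 < q.1 ∧ q.2 ∈ basicOpen p.1 p.2) ∧
      (p.1 < κ.ord → q.1 < κ.ord ∧ q.2 p.1 = false ∧ Disjoint (basicOpen q.1 q.2) A) := by
  by_cases hp : p.1 < κ.ord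
  · obtain ⟨b, hab, hb, t, ht, hdisj⟩ := hA.exists_basicOpen_disjoint
      (aleph0_pos.trans_le hκ).ne' ((isSuccLimit_ord hκ).add_one_lt hp)
      (Function.update p.2 p.1 false)
    refine ⟨(b, t), ⟨(lt_add_one p.1).trans_le hab, fun i hi => ?_⟩, fun _ => ⟨hb, ?_, hdisj⟩⟩
    · exact (ht i (hi.trans (lt_add_one p.1))).trans (Function.update_of_ne hi.ne ..)
    · exact (ht p.1 (lt_add_one p.1)).trans (Function.update_self ..)
  · exact ⟨(p.1 + 1, p.2), ⟨lt_add_one p.1, fun _ _ => rfl⟩, fun h => absurd h hp⟩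

section Chain

universe u

variable (next : Ordinal.{u} → Ordinal.{u} × (Ordinal.{u} → Bool) → Ordinal.{u} × (Ordinal.{u} → Bool))

open Classical in
/-- At a limit stage the functions are glued: position `k` is `true` iff some earlier stage that
already decides `k` says so. -/
noncomputable def chain (o : Ordinal.{u}) : Ordinal.{u} × (Ordinal.{u} → Bool) :=
  Ordinal.limitRecOn o (0, fun _ => false) next fun o _ prev =>
    (⨆ j : Iio o, (prev j j.2).1,
      fun k => decide (∃ j, ∃ hj : j < o, k < (prev j hj).1 ∧ (prev j hj).2 k = true))

lemma chain_zero : chain next 0 = (0, fun _ => false) :=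
  Ordinal.limitRecOn_zero ..

lemma chain_add_one (o : Ordinal.{u}) : chain next (o + 1) = next o (chain next o) :=
  Ordinal.limitRecOn_add_one ..

open Classical in
lemma chain_of_isSuccLimit {o : Ordinal.{u}} (ho : IsSuccLimit o) :
    chain next o = (⨆ j : Iio o, (chain next j).1,
      fun k => decide (∃ j < o, k < (chain next j).1 ∧ (chain next j).2 k = true)) := by
  rw [chain, Ordinal.limitRecOn_limit _ _ _ _ ho]
  simp only [exists_prop]
  rfl

/-- The union of the chain; stage `k + 1` already decides position `k`. -/
noncomputable def chainLimit (k : Ordinal.{u}) : Bool :=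
  (chain next (k + 1)).2 k

variable {next}

lemma chain_fst_lt_ord {κ : Cardinal.{u}} (hκ : κ.IsRegular)
    (hnext : ∀ j p, p.1 < κ.ord → (next j p).1 < κ.ord) {o : Ordinal.{u}} (ho : o < κ.ord) :
    (chain next o).1 < κ.ord := by
  induction o using Ordinal.limitRecOn with
  | zero => exact (chain_zero next).symm ▸ ord_pos.2 (aleph0_pos.trans_le hκ.aleph0_le)
  | add_one o ih =>
    rw [chain_add_one]
    exact hnext o _ (ih ((lt_add_one o).trans ho))
  | limit o hlim ih =>
    rw [chain_of_isSuccLimit next hlim]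
    refine Ordinal.lift_iSup_lt_of_lt_cof ?_ fun j => ih j j.2 (j.2.trans ho)
    rw [mk_Iio_ordinal, ← Ordinal.lift_cof, hκ.cof_ord, lift_lift, lift_lt]
    exact lt_ord.1 ho

variable (hnext : ∀ j p, p.1 < (next j p).1 ∧ (next j p).2 ∈ basicOpen p.1 p.2)
include hnext

lemma isNormal_chain_fst : IsNormal fun o => (chain next o).1 := by
  refine IsNormal.of_succ_lt (fun o => ?_) fun {o} ho => ?_
  · rw [succ_eq_add_one, chain_add_one]
    exact (hnext o _).1
  · have : Nonempty (Iio o) := ⟨⟨0, ho.bot_lt⟩⟩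
    rw [chain_of_isSuccLimit next ho, image_eq_range]
    exact isLUB_ciSup Ordinal.bddAbove_of_small

lemma chain_snd_of_le {i j k : Ordinal.{u}} (hij : i ≤ j) (hk : k < (chain next i).1) :
    (chain next j).2 k = (chain next i).2 k := by
  induction j using Ordinal.limitRecOn generalizing i with
  | zero => rw [nonpos_iff_eq_zero.1 hij]
  | add_one j ih =>
    obtain hij | rfl := hij.lt_or_eq
    · have hkj : k < (chain next j).1 :=
        hk.trans_le ((isNormal_chain_fst hnext).monotone (lt_add_one_iff.1 hij))
      rw [chain_add_one, (hnext j _).2 k hkj, ih (lt_add_one_iff.1 hij) hk]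
    · rfl
  | limit o ho ih =>
    obtain hio | rfl := hij.lt_or_eq
    · classical
      rw [chain_of_isSuccLimit next ho, Bool.eq_iff_iff, decide_eq_true_iff]
      refine ⟨fun ⟨m, hmo, hkm, hm⟩ => ?_, fun hi => ⟨i, hio, hk, hi⟩⟩
      obtain hmi | him := le_total m i
      · rwa [ih i hio hmi hkm]
      · rwa [← ih m hmo him hk]
    · rfl

lemma chainLimit_mem_basicOpen (j : Ordinal.{u}) :
    chainLimit next ∈ basicOpen (chain next j).1 (chain next j).2 := by
  intro k hk
  have hk' : k < (chain next (k + 1)).1 :=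
    (lt_add_one k).trans_le (isNormal_chain_fst hnext).strictMono.le_apply
  obtain hjk | hkj := le_total j (k + 1)
  · exact chain_snd_of_le hnext hjk hk
  · exact (chain_snd_of_le hnext hkj hk').symm

end Chain

lemma isClubIn_image_Iio {f : Ordinal → Ordinal} (hf : IsNormal f) {κ : Ordinal}
    (hfκ : ∀ i < κ, f i < κ) : IsClubIn (f '' Iio κ) κ := by
  refine ⟨image_subset_iff.2 hfκ, fun l hlκ hl hcof => ?_,
    fun a ha => ⟨f a, mem_image_of_mem f ha, hf.strictMono.le_apply⟩⟩
  have hlub : IsLUB (f '' Iio κ ∩ Iio l) l := by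
    refine ⟨fun b hb => hb.2.le, fun b hb => not_lt.1 fun hbl => ?_⟩
    obtain ⟨e, he, hbe, hel⟩ := hcof (b + 1) (hl.add_one_lt hbl)
    exact (lt_add_one b).not_ge (hbe.trans (hb ⟨he, hel⟩))
  have hne : (f '' Iio κ ∩ Iio l).Nonempty := by
    obtain ⟨e, he, -, hel⟩ := hcof 0 hl.bot_lt
    exact ⟨e, he, hel⟩
  obtain ⟨j, rfl⟩ := hf.dirSupClosed_range (inter_subset_left.trans (image_subset_range f _))
    hne (isChain_of_trichotomous _).directedOn hlub
  exact ⟨j, hf.strictMono.le_apply.trans_lt hlκ, rfl⟩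

theorem zeroOnClub_not_meager_general (κ : Cardinal) (hreg : κ.IsRegular)
    (X : Ordinal → Set (Ordinal → Bool)) (hX : ∀ i, Nwd2 κ (X i)) :
    ¬ ({ x : Ordinal → Bool | ∃ c, IsClubIn c κ.ord ∧ ∀ i ∈ c, x i = false } ⊆
        ⋃ i ∈ Set.Iio κ.ord, X i) := by
  choose next hnext hgood using fun j => (hX j).exists_extension hreg.aleph0_le
  have hlt : ∀ i < κ.ord, (chain next i).1 < κ.ord := fun i =>
    chain_fst_lt_ord hreg fun j p hp => (hgood j p hp).1
  have hvanish : ∀ i < κ.ord, chainLimit next (chain next i).1 = false := fun i hi => by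
    rw [chainLimit_mem_basicOpen hnext (i + 1) _ (by rw [chain_add_one]; exact (hnext i _).1),
      chain_add_one]
    exact (hgood i _ (hlt i hi)).2.1
  intro hsub
  obtain ⟨i, hi, hxi⟩ : ∃ i < κ.ord, chainLimit next ∈ X i := by
    simpa using hsub ⟨_, isClubIn_image_Iio (isNormal_chain_fst hnext) hlt,
      by simpa using hvanish⟩
  have hmem := chainLimit_mem_basicOpen hnext (i + 1)
  rw [chain_add_one] at hmem
  exact (hgood i _ (hlt i hi)).2.2.le_bot ⟨hmem, hxi⟩

/-- The set of `x ∈ 2^κ` vanishing on a club is not contained in any union of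
`κ`-many nowhere dense sets, i.e. it is non-meager. -/
theorem zeroOnClub_not_meager (κ : Cardinal) (hreg : κ.IsRegular)
    (hunc : Cardinal.aleph0 < κ) (hlt : Cardinal.powerlt κ κ = κ)
    (X : Ordinal → Set (Ordinal → Bool)) (hX : ∀ i, Nwd2 κ (X i)) :
    ¬ ({ x : Ordinal → Bool | ∃ c, IsClubIn c κ.ord ∧ ∀ i ∈ c, x i = false } ⊆
        ⋃ i ∈ Set.Iio κ.ord, X i) :=
  zeroOnClub_not_meager_general κ hreg X hX
end

section
/- Let κ be an uncountable regular cardinal with κ^{<κ} = κ. The club filter C = {x ∈ 2^κ : ∃ club c ⊆ κ, ∀ i ∈ c, x(i) = 1} does not have the Baire property in 2^κ, i.e., there is no open set O such that C △ O is meager (Halko–Shelah). -/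
open Cardinal Set

/-- Meager: a union of `κ`-many nowhere dense sets. -/
def MeagerIn2 (κ : Cardinal) (A : Set (Ordinal → Bool)) : Prop :=
  ∃ X : Ordinal → Set (Ordinal → Bool),
    (∀ i, Nwd2 κ (X i)) ∧ A ⊆ ⋃ i ∈ Set.Iio κ.ord, X i

/-- The club filter `C = {x : ∃ club c, ∀ i ∈ c, x i = 1}` on `2^κ`. -/
def clubFilterSet (κ : Cardinal) : Set (Ordinal → Bool) :=
  { x | ∃ c, IsClubIn c κ.ord ∧ ∀ i ∈ c, x i = true }

/-!
Given nowhere dense sets `X i` (`i < κ`) and a bit `b`, build by transfinite recursion a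
continuous increasing chain of conditions `⟨a i, s i⟩`, `i < κ`: at stage `i + 1` set the bit at
position `a i` to `b` and then extend so as to avoid `X i`; at limit stages take unions, which stay
below `κ` by regularity. The union `x` of the chain avoids every `X i` and equals `b` on the club
`{a i | i < κ}`, closed because `i ↦ a i` is normal. If `O = ∅`, taking `b = 1` gives `x ∈ C \ O`;
otherwise start inside a basic open subset of `O` with `b = 0`, so that `x ∈ O \ C` because any two
clubs meet. Either way `x` lies in `C △ O` but in no `X i`.
-/

open Topology Set.Notation

theorem isLUB_inter_Iio_of_isSuccLimit {c : Set Ordinal} {l : Ordinal}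
    (hl : Order.IsSuccLimit l) (h : ∀ a < l, ∃ b ∈ c, a ≤ b ∧ b < l) : IsLUB (c ∩ Iio l) l := by
  refine ⟨fun b hb => hb.2.le, fun u hu => le_of_not_gt fun hul => ?_⟩
  obtain ⟨b, hbc, hub, hbl⟩ := h (Order.succ u) (hl.succ_lt hul)
  exact ((Order.lt_succ u).trans_le hub).not_ge (hu ⟨hbc, hbl⟩)

theorem isClubIn_range_inter_Iio {f : Ordinal → Ordinal} (hf : Order.IsNormal f) {k : Ordinal}
    (hfk : ∀ i < k, f i < k) : IsClubIn (range f ∩ Iio k) k := by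
  refine ⟨inter_subset_right, fun l hlk hl happ => ⟨?_, hlk⟩,
    fun a ha => ⟨f a, ⟨mem_range_self a, hfk a ha⟩, hf.strictMono.le_apply⟩⟩
  obtain ⟨b, hb, -, hbl⟩ := happ 0 hl.bot_lt
  exact hf.isClub_range.isLUB_mem (t := range f ∩ Iio k ∩ Iio l) (fun x hx => hx.1.1) ⟨b, hb, hbl⟩
    (isLUB_inter_Iio_of_isSuccLimit hl happ)

theorem IsClubIn.isClub {c : Set Ordinal} {k : Ordinal} (hc : IsClubIn c k) :
    IsClub (Iio k ↓∩ c) := by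
  refine ⟨fun d hdc hd _ a ha => ?_, fun a => ?_⟩
  · by_cases had : a ∈ d
    · exact hdc had
    have happ : ∀ b < a.1, ∃ e ∈ c, b ≤ e ∧ e < a.1 := by
      intro b hb
      obtain ⟨e, hed, hbe⟩ := (lt_isLUB_iff ha).1 (show (⟨b, hb.trans a.2⟩ : Iio k) < a from hb)
      exact ⟨e, hdc hed, hbe.le, (ha.1 hed).lt_of_ne (ne_of_mem_of_not_mem hed had)⟩
    exact hc.2.1 a a.2 ((ha.isSuccLimit_of_notMem hd had).subtypeVal (isLowerSet_Iio k)) happ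
  · obtain ⟨b, hb, hab⟩ := hc.2.2 a a.2
    exact ⟨⟨b, hc.1 hb⟩, hb, hab⟩

theorem IsClubIn.inter_nonempty {c c' : Set Ordinal} {k : Ordinal} (hk : ℵ₀ < k.cof)
    (hc : IsClubIn c k) (hc' : IsClubIn c' k) : (c ∩ c').Nonempty := by
  have hk₀ : k ≠ 0 := by
    rintro rfl
    simp at hk
  have : Nonempty (Iio k) := ⟨⟨0, pos_iff_ne_zero.2 hk₀⟩⟩
  have hcof : Order.cof (Iio k) ≠ ℵ₀ := by
    rw [Ordinal.cof_Iio, ← Ordinal.lift_cof, Ne, Cardinal.lift_eq_aleph0]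
    exact hk.ne'
  obtain ⟨x, hx, hx'⟩ := (hc.isClub.inter hcof hc'.isClub).nonempty
  exact ⟨x, hx, hx'⟩

universe u

/-- A condition `⟨a, s⟩` codes the basic open set `cyl` of functions agreeing with `s` below `a`. -/
structure Condition : Type (u + 1) where
  len : Ordinal.{u}
  val : Ordinal.{u} → Bool

namespace Condition

def cyl (p : Condition.{u}) : Set (Ordinal.{u} → Bool) := {x | ∀ i < p.len, x i = p.val i}

theorem val_mem_cyl (p : Condition.{u}) : p.val ∈ p.cyl := fun _ _ => rfl

theorem cyl_subset_cyl {p q : Condition.{u}} (hlen : p.len ≤ q.len) (hq : q.val ∈ p.cyl) :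
    q.cyl ⊆ p.cyl :=
  fun _ hx i hi => (hx i (hi.trans_le hlen)).trans (hq i hi)

/-- `p ≤ q` means that `q` extends `p`. -/
instance : Preorder Condition.{u} where
  le p q := p.len ≤ q.len ∧ q.val ∈ p.cyl
  le_refl p := ⟨le_rfl, p.val_mem_cyl⟩
  le_trans _ _ _ hpq hqr := ⟨hpq.1.trans hqr.1, cyl_subset_cyl hpq.1 hpq.2 hqr.2⟩

theorem val_eq_of_le {p q : Condition.{u}} (h : p ≤ q) {i : Ordinal} (hi : i < p.len) :
    q.val i = p.val i :=
  h.2 i hi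

open Classical in
/-- The union of an increasing family; the value `false` beyond its length is arbitrary. -/
noncomputable def glue (o : Ordinal.{u}) (P : ∀ j < o, Condition.{u}) : Condition.{u} where
  len := ⨆ j : Iio o, (P j j.2).len
  val i := if h : ∃ j : Iio o, i < (P j j.2).len then (P _ h.choose.2).val i else false

theorem le_glue {o : Ordinal.{u}} {P : ∀ j < o, Condition.{u}}
    (hP : ∀ i j (hi : i < o) (hj : j < o), i ≤ j → P i hi ≤ P j hj) {j : Ordinal} (hj : j < o) :
    P j hj ≤ glue o P := by
  refine ⟨Ordinal.le_iSup (fun j : Iio o => (P j j.2).len) ⟨j, hj⟩, fun i hi => ?_⟩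
  have h : ∃ j : Iio o, i < (P j j.2).len := ⟨⟨j, hj⟩, hi⟩
  simp only [glue, dif_pos h]
  rcases le_total j h.choose with hle | hle
  · exact val_eq_of_le (hP _ _ _ _ hle) hi
  · exact (val_eq_of_le (hP _ _ _ _ hle) h.choose_spec).symm

variable (step : Ordinal.{u} → Condition.{u} → Condition.{u}) (p₀ : Condition.{u})

noncomputable def chain (i : Ordinal.{u}) : Condition.{u} :=
  Ordinal.limitRecOn i p₀ step fun o _ P => glue o P

@[simp]
theorem chain_zero : chain step p₀ 0 = p₀ :=
  Ordinal.limitRecOn_zero ..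

@[simp]
theorem chain_add_one (o : Ordinal) : chain step p₀ (o + 1) = step o (chain step p₀ o) :=
  Ordinal.limitRecOn_add_one ..

theorem chain_of_isSuccLimit {o : Ordinal} (ho : Order.IsSuccLimit o) :
    chain step p₀ o = glue o fun j _ => chain step p₀ j :=
  Ordinal.limitRecOn_limit _ _ _ _ ho

variable {step}

theorem monotone_chain (hstep : ∀ o p, p ≤ step o p) : Monotone (chain step p₀) := by
  suffices ∀ j, ∀ i ≤ j, chain step p₀ i ≤ chain step p₀ j from fun i j h => this j i h
  intro j
  induction j using Ordinal.limitRecOn with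
  | zero => intro i hi; rw [nonpos_iff_eq_zero.1 hi]
  | add_one o ih =>
    intro i hi
    rcases hi.eq_or_lt with rfl | hlt
    · exact le_rfl
    · rw [chain_add_one]
      exact (ih i (Order.lt_add_one_iff.1 hlt)).trans (hstep _ _)
  | limit o ho ih =>
    intro i hi
    rcases hi.eq_or_lt with rfl | hlt
    · exact le_rfl
    · rw [chain_of_isSuccLimit step p₀ ho]
      exact le_glue (fun i j _ hj hij => ih j hj i hij) hlt

theorem isNormal_len_chain (hstep : ∀ o p, p ≤ step o p)
    (hlen : ∀ o p, p.len < (step o p).len) : Order.IsNormal fun i => (chain step p₀ i).len := by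
  refine Order.isNormal_iff.2 ⟨fun i j hij => ?_, fun o ho a ha => ?_⟩
  · calc (chain step p₀ i).len < (chain step p₀ (i + 1)).len := by
          rw [chain_add_one]; exact hlen _ _
      _ ≤ (chain step p₀ j).len := (monotone_chain p₀ hstep (Order.add_one_le_of_lt hij)).1
  · rw [chain_of_isSuccLimit step p₀ ho]
    exact Ordinal.iSup_le fun j => ha j j.2

theorem len_chain_lt {κ : Cardinal.{u}} (hκ : κ.IsRegular)
    (hstep : ∀ o < κ.ord, ∀ p : Condition, p.len < κ.ord → (step o p).len < κ.ord)
    (hp₀ : p₀.len < κ.ord) {i : Ordinal} (hi : i < κ.ord) : (chain step p₀ i).len < κ.ord := by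
  induction i using Ordinal.limitRecOn with
  | zero => rwa [chain_zero]
  | add_one o ih =>
    have ho : o < κ.ord := (lt_add_one o).trans hi
    rw [chain_add_one]
    exact hstep o ho _ (ih ho)
  | limit o ho ih =>
    rw [chain_of_isSuccLimit step p₀ ho]
    refine Ordinal.lift_iSup_lt_of_lt_cof ?_ fun j => ih j j.2 (j.2.trans hi)
    rw [Cardinal.mk_Iio_ordinal, Cardinal.lift_lift, ← Ordinal.lift_cof, Cardinal.lift_lt,
      hκ.cof_ord]
    exact Cardinal.lt_ord.1 hi

end Condition

open Condition

theorem isOpen_cyl {κ : Cardinal.{u}} {p : Condition.{u}} (hp : p.len < κ.ord) :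
    IsOpen[boundedTop2 κ] p.cyl :=
  TopologicalSpace.GenerateOpen.basic _ ⟨p.len, hp, p.val, rfl⟩

theorem exists_cyl_subset_of_isOpen {κ : Cardinal.{u}} (hκ : κ ≠ 0) {V : Set (Ordinal → Bool)}
    (hV : IsOpen[boundedTop2 κ] V) {y : Ordinal → Bool} (hy : y ∈ V) :
    ∃ a < κ.ord, (⟨a, y⟩ : Condition).cyl ⊆ V := by
  induction hV generalizing y with
  | basic U hU =>
    obtain ⟨a, ha, s, rfl⟩ := hU
    exact ⟨a, ha, fun x hx i hi => (hx i hi).trans (hy i hi)⟩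
  | univ => exact ⟨0, Cardinal.ord_pos.2 (pos_iff_ne_zero.2 hκ), subset_univ _⟩
  | inter U W _ _ ihU ihW =>
    obtain ⟨a, ha, hU⟩ := ihU hy.1
    obtain ⟨b, hb, hW⟩ := ihW hy.2
    refine ⟨max a b, max_lt ha hb, subset_inter (fun _ hx => hU ?_) (fun _ hx => hW ?_)⟩
    · exact fun i hi => hx i (hi.trans_le (le_max_left a b))
    · exact fun i hi => hx i (hi.trans_le (le_max_right a b))
  | sUnion S _ ih =>
    obtain ⟨U, hU, hyU⟩ := hy
    obtain ⟨a, ha, h⟩ := ih U hU hyU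
    exact ⟨a, ha, h.trans (subset_sUnion_of_mem hU)⟩

theorem Nwd2.exists_le_disjoint {κ : Cardinal.{u}} {X : Set (Ordinal → Bool)} (hX : Nwd2 κ X)
    {p : Condition.{u}} (hp : p.len < κ.ord) :
    ∃ q, p ≤ q ∧ q.len < κ.ord ∧ Disjoint q.cyl X := by
  let := boundedTop2 κ
  have hκ : κ ≠ 0 := by
    rintro rfl
    simp at hp
  obtain ⟨y, hyp, hyX⟩ : ∃ y ∈ p.cyl, y ∉ closure X := by
    by_contra! h
    have := interior_maximal h (isOpen_cyl hp) p.val_mem_cyl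
    rwa [show interior (closure X) = ∅ from hX] at this
  obtain ⟨a, ha, hsub⟩ := exists_cyl_subset_of_isOpen hκ isClosed_closure.isOpen_compl hyX
  refine ⟨⟨max p.len a, y⟩, ⟨le_max_left _ _, hyp⟩, max_lt hp ha, ?_⟩
  refine Set.disjoint_left.2 fun x hx hxX => hsub ?_ (subset_closure hxX)
  exact cyl_subset_cyl (p := ⟨a, y⟩) (q := ⟨max p.len a, y⟩) (le_max_right _ _) (fun _ _ => rfl) hx

theorem exists_extension_avoiding {κ : Cardinal.{u}} (hκ : ℵ₀ ≤ κ)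
    {X : Ordinal → Set (Ordinal → Bool)} (hX : ∀ i < κ.ord, Nwd2 κ (X i)) (b : Bool)
    (o : Ordinal) (p : Condition) :
    ∃ q, p ≤ q ∧ p.len < q.len ∧ q.val p.len = b ∧
      (o < κ.ord → p.len < κ.ord → q.len < κ.ord ∧ Disjoint q.cyl (X o)) := by
  let p' : Condition := ⟨p.len + 1, Function.update p.val p.len b⟩
  have hpp' : p ≤ p' := ⟨(lt_add_one _).le, fun i hi => Function.update_of_ne hi.ne _ _⟩
  obtain ⟨q, hp'q, hq⟩ : ∃ q, p' ≤ q ∧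
      (o < κ.ord → p.len < κ.ord → q.len < κ.ord ∧ Disjoint q.cyl (X o)) := by
    by_cases h : o < κ.ord ∧ p.len < κ.ord
    · obtain ⟨q, hq, hqlt, hqX⟩ :=
        (hX o h.1).exists_le_disjoint (p := p') ((Cardinal.isSuccLimit_ord hκ).add_one_lt h.2)
      exact ⟨q, hq, fun _ _ => ⟨hqlt, hqX⟩⟩
    · exact ⟨p', le_rfl, fun ho hp => absurd ⟨ho, hp⟩ h⟩
  refine ⟨q, hpp'.trans hp'q, (lt_add_one _).trans_le hp'q.1, ?_, hq⟩
  rw [val_eq_of_le hp'q (lt_add_one _)]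
  exact Function.update_self ..

theorem exists_generic_of_nwd2 {κ : Cardinal.{u}} (hκ : κ.IsRegular)
    {X : Ordinal → Set (Ordinal → Bool)} (hX : ∀ i < κ.ord, Nwd2 κ (X i)) (b : Bool)
    {p : Condition} (hp : p.len < κ.ord) :
    ∃ x ∈ p.cyl, (∀ i < κ.ord, x ∉ X i) ∧ ∃ c, IsClubIn c κ.ord ∧ ∀ i ∈ c, x i = b := by
  choose step hle hlen hval havoid using exists_extension_avoiding hκ.aleph0_le hX b
  have hmono := monotone_chain p hle
  have hnormal := isNormal_len_chain p hle hlen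
  have hlt : ∀ i < κ.ord, (chain step p i).len < κ.ord :=
    fun i => len_chain_lt p hκ (fun o ho q hq => (havoid o q ho hq).1) hp
  set x := (chain step p κ.ord).val
  have hx : ∀ i < κ.ord, x ∈ (step i (chain step p i)).cyl := fun i hi => by
    rw [← chain_add_one step p]
    exact (hmono (Order.add_one_le_of_lt hi)).2
  refine ⟨x, ?_, fun i hi hxX => ?_, _, isClubIn_range_inter_Iio hnormal hlt, ?_⟩
  · simpa using (hmono (zero_le (a := κ.ord))).2
  · exact (havoid i _ hi (hlt i hi)).2.notMem_of_mem_left (hx i hi) hxX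
  · rintro _ ⟨⟨i, rfl⟩, hi⟩
    rw [hx i (hnormal.strictMono.le_apply.trans_lt hi) _ (hlen i _)]
    exact hval i _

theorem notMem_clubFilterSet_of_isClubIn {κ : Cardinal} (hκ : ℵ₀ < κ.ord.cof)
    {c : Set Ordinal} (hc : IsClubIn c κ.ord) {x : Ordinal → Bool} (hx : ∀ i ∈ c, x i = false) :
    x ∉ clubFilterSet κ := by
  rintro ⟨c', hc', hx'⟩
  obtain ⟨i, hi, hi'⟩ := hc.inter_nonempty hκ hc'
  simpa [hx i hi] using hx' i hi'

theorem clubFilter_no_baireProperty_general (κ : Cardinal) (hreg : κ.IsRegular)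
    (hunc : Cardinal.aleph0 < κ) :
    ¬ ∃ O : Set (Ordinal → Bool), @IsOpen _ (boundedTop2 κ) O ∧
        MeagerIn2 κ (symmDiff (clubFilterSet κ) O) := by
  rintro ⟨O, hO, X, hX, hsub⟩
  have hgeneric : ∀ x, (∀ i < κ.ord, x ∉ X i) → x ∉ symmDiff (clubFilterSet κ) O := by
    intro x hx hxO
    obtain ⟨i, hi, hxi⟩ := mem_iUnion₂.1 (hsub hxO)
    exact hx i hi hxi
  rcases O.eq_empty_or_nonempty with rfl | ⟨y, hy⟩
  · obtain ⟨x, -, hxX, c, hc, hcx⟩ := exists_generic_of_nwd2 hreg (fun i _ => hX i) true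
      (p := ⟨0, fun _ => true⟩) (Cardinal.ord_pos.2 hreg.pos)
    exact hgeneric x hxX (mem_symmDiff.2 (Or.inl ⟨⟨c, hc, hcx⟩, notMem_empty x⟩))
  · obtain ⟨a, ha, hyO⟩ := exists_cyl_subset_of_isOpen hreg.pos.ne' hO hy
    obtain ⟨x, hxa, hxX, c, hc, hcx⟩ := exists_generic_of_nwd2 hreg (fun i _ => hX i) false
      (p := ⟨a, y⟩) ha
    have hcof : ℵ₀ < κ.ord.cof := by rwa [hreg.cof_ord]
    exact hgeneric x hxX
      (mem_symmDiff.2 (Or.inr ⟨hyO hxa, notMem_clubFilterSet_of_isClubIn hcof hc hcx⟩))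

/-- Halko–Shelah: the club filter does not have the Baire property in `2^κ`:
there is no open set `O` with `C △ O` meager. -/
theorem clubFilter_no_baireProperty (κ : Cardinal) (hreg : κ.IsRegular)
    (hunc : Cardinal.aleph0 < κ) (hlt : Cardinal.powerlt κ κ = κ) :
    ¬ ∃ O : Set (Ordinal → Bool), @IsOpen _ (boundedTop2 κ) O ∧
        MeagerIn2 κ (symmDiff (clubFilterSet κ) O) :=
  clubFilter_no_baireProperty_general κ hreg hunc
end

section
/- Let κ be an uncountable regular cardinal, and fix a stationary, co-stationary set S ⊆ κ. For i < κ, let A_i = {x ∈ κ_↑^κ : ∀ j > i, x(j) ∈ S}, and A = ⋃_{i<κ} A_i. Then: (a) for every κ-Laver tree T and every i < κ there is a κ-Laver tree T' ⊆ T with [T'] ∩ A_i = ∅; but (b) every κ-Laver tree T contains a branch belonging to A. Hence the κ-ideal generated by the Laver-null sets is strictly larger than the family of Laver-null sets. -/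
open Cardinal Set

structure PreSeq where
  len : Ordinal
  val : Ordinal → Ordinal

def PreSeq.Canonical (s : PreSeq) : Prop := ∀ i, s.len ≤ i → s.val i = 0

def PreSeq.Ext (s t : PreSeq) : Prop := s.len ≤ t.len ∧ ∀ i < s.len, s.val i = t.val i

def PreSeq.Increasing (s : PreSeq) : Prop := ∀ i j, i < j → j < s.len → s.val i < s.val j

noncomputable def restrictFn (x : Ordinal → Ordinal) (a : Ordinal) : PreSeq :=
  ⟨a, fun i => if i < a then x i else 0⟩

noncomputable def PreSeq.snoc (s : PreSeq) (α : Ordinal) : PreSeq :=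
  ⟨s.len + 1, fun i => if i < s.len then s.val i else if i = s.len then α else 0⟩

/-- `S` is stationary in `k`: it meets every club of `k`. -/
def IsStatIn (S : Set Ordinal) (k : Ordinal) : Prop :=
  ∀ c, IsClubIn c k → (c ∩ S).Nonempty

/-- κ-Laver tree (with closure under unions of increasing chains of length `< κ`). -/
def IsLaverTree (κ : Cardinal) (T : Set PreSeq) : Prop :=
  T.Nonempty ∧
  (∀ s ∈ T, s.len < κ.ord ∧ s.Canonical ∧ s.Increasing) ∧
  (∀ s ∈ T, ∀ a ≤ s.len, restrictFn s.val a ∈ T) ∧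
  (∀ x : Ordinal → Ordinal, ∀ l, l < κ.ord → Order.IsSuccLimit l →
    (∀ a < l, restrictFn x a ∈ T) → restrictFn x l ∈ T) ∧
  (∃ st ∈ T, (∀ t ∈ T, PreSeq.Ext st t ∨ PreSeq.Ext t st) ∧
    (∀ t ∈ T, PreSeq.Ext st t →
      ∃ c, IsClubIn c κ.ord ∧ ∀ α ∈ c, PreSeq.snoc t α ∈ T))

def Branches (κ : Cardinal) (T : Set PreSeq) : Set (Ordinal → Ordinal) :=
  { x | ∀ a < κ.ord, restrictFn x a ∈ T }

/-- `x` is strictly increasing below `κ`. -/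
def IncrBelow (κ : Cardinal) (x : Ordinal → Ordinal) : Prop :=
  ∀ i j, i < j → j < κ.ord → x i < x j

/-- The sets `A_i = {x ∈ κ_↑^κ : ∀ j > i, x j ∈ S}`. -/
def ASet (κ : Cardinal) (S : Set Ordinal) (i : Ordinal) : Set (Ordinal → Ordinal) :=
  { x | IncrBelow κ x ∧ ∀ j, i < j → j < κ.ord → x j ∈ S }


/-!
If `W ⊆ κ` is stationary, every κ-Laver tree has a branch through its stem whose values above
the stem all lie in `W`: at a successor step pick a point of `W` in the splitting club, at a
limit step use that the tree is closed under unions of chains. With `W = S` this is (b).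
With `W = κ \ S`, such a branch `x` yields a node `u = x ↾ (j + 1)` with `j > i` and
`x j ∉ S`; the nodes comparable with `u` form a κ-Laver subtree all of whose branches take
the value `x j` at `j`, hence avoid `A_i`, which is (a). Finally (b), applied below the tree
of all increasing sequences, shows that `A` is not Laver-null.
-/

attribute [ext] PreSeq

namespace PreSeq

theorem Ext.refl (s : PreSeq) : s.Ext s := ⟨le_rfl, fun _ _ => rfl⟩

theorem Ext.trans {s t u : PreSeq} (hst : s.Ext t) (htu : t.Ext u) : s.Ext u :=
  ⟨hst.1.trans htu.1, fun i hi => (hst.2 i hi).trans (htu.2 i (hi.trans_le hst.1))⟩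

theorem val_eq_of_ext_or_ext {s t : PreSeq} (h : s.Ext t ∨ t.Ext s) {i : Ordinal}
    (hs : i < s.len) (ht : i < t.len) : s.val i = t.val i := by
  rcases h with h | h
  · exact h.2 i hs
  · exact (h.2 i ht).symm

theorem snoc_val_of_lt (t : PreSeq) (α : Ordinal) {i : Ordinal} (hi : i < t.len) :
    (t.snoc α).val i = t.val i :=
  if_pos hi

theorem snoc_val_len (t : PreSeq) (α : Ordinal) : (t.snoc α).val t.len = α := by
  simp [snoc]

theorem snoc_val_of_len_lt (t : PreSeq) (α : Ordinal) {i : Ordinal} (hi : t.len < i) :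
    (t.snoc α).val i = 0 := by
  simp [snoc, hi.not_gt, hi.ne']

theorem ext_snoc (t : PreSeq) (α : Ordinal) : t.Ext (t.snoc α) :=
  ⟨(lt_add_one t.len).le, fun _ hi => (t.snoc_val_of_lt α hi).symm⟩

end PreSeq

section Restrict

variable {x y : Ordinal → Ordinal} {a i : Ordinal}

@[simp] theorem restrictFn_len : (restrictFn x a).len = a := rfl

theorem restrictFn_val_of_lt (h : i < a) : (restrictFn x a).val i = x i := if_pos h

theorem restrictFn_congr (h : ∀ i < a, x i = y i) : restrictFn x a = restrictFn y a := by
  ext i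
  · rfl
  · by_cases hi : i < a <;> simp [restrictFn, hi, h i]

theorem restrictFn_add_one (x : Ordinal → Ordinal) (b : Ordinal) :
    restrictFn x (b + 1) = (restrictFn x b).snoc (x b) := by
  ext i
  · rfl
  · rcases lt_trichotomy i b with h | rfl | h
    · rw [PreSeq.snoc_val_of_lt _ _ h, restrictFn_val_of_lt h,
        restrictFn_val_of_lt (h.trans (lt_add_one b))]
    · rw [restrictFn_val_of_lt (lt_add_one i)]
      exact ((restrictFn x i).snoc_val_len _).symm
    · rw [PreSeq.snoc_val_of_len_lt _ _ h]
      exact if_neg (Order.add_one_le_iff.2 h).not_gt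

theorem ext_restrictFn_iff {s : PreSeq} :
    s.Ext (restrictFn x a) ↔ s.len ≤ a ∧ ∀ i < s.len, s.val i = x i :=
  ⟨fun h => ⟨h.1, fun i hi => (h.2 i hi).trans (restrictFn_val_of_lt (hi.trans_le h.1))⟩,
    fun h => ⟨h.1, fun i hi => (h.2 i hi).trans (restrictFn_val_of_lt (hi.trans_le h.1)).symm⟩⟩

theorem ext_or_ext_restrictFn_iff {u : PreSeq} :
    (restrictFn x a).Ext u ∨ u.Ext (restrictFn x a) ↔ ∀ i < a, i < u.len → x i = u.val i := by
  refine ⟨fun h i hi hiu => (restrictFn_val_of_lt hi).symm.trans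
    (PreSeq.val_eq_of_ext_or_ext h hi hiu), fun h => ?_⟩
  rcases le_total a u.len with hle | hle
  · exact Or.inl ⟨hle, fun i hi => (restrictFn_val_of_lt hi).trans (h i hi (hi.trans_le hle))⟩
  · exact Or.inr (ext_restrictFn_iff.2 ⟨hle, fun i hi => (h i (hi.trans_le hle) hi).symm⟩)

end Restrict

theorem exists_eq_apply_restrictFn (g : PreSeq → Ordinal) :
    ∃ x : Ordinal → Ordinal, ∀ j, x j = g (restrictFn x j) := by
  let x := Ordinal.lt_wf.fix fun j prior => g ⟨j, fun i => if h : i < j then prior i h else 0⟩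
  refine ⟨x, fun j => (Ordinal.lt_wf.fix_eq _ j).trans (congrArg g ?_)⟩
  ext i
  · rfl
  · by_cases hi : i < j <;> simp [restrictFn, hi, x]

section Branches

variable {κ : Cardinal} {T : Set PreSeq} {st : PreSeq} {W : Set Ordinal}

theorem exists_mem_branches_of_forall_snoc
    (hlimit : ∀ x l, l < κ.ord → Order.IsSuccLimit l →
      (∀ a < l, restrictFn x a ∈ T) → restrictFn x l ∈ T)
    (hst : ∀ a ≤ st.len, restrictFn st.val a ∈ T)
    (hsnoc : ∀ t ∈ T, st.Ext t → ∃ α ∈ W, t.snoc α ∈ T) :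
    ∃ x ∈ Branches κ T, (∀ i < st.len, x i = st.val i) ∧
      ∀ j, st.len ≤ j → j < κ.ord → x j ∈ W := by
  classical
  -- No `x ↾ j` with `j < st.len` extends `st`, so below the stem `x` copies `st`.
  obtain ⟨x, hx⟩ := exists_eq_apply_restrictFn fun t =>
    if h : t ∈ T ∧ st.Ext t then (hsnoc t h.1 h.2).choose else st.val t.len
  have hstem : ∀ i < st.len, x i = st.val i := fun i hi => by
    rw [hx i, dif_neg fun h => hi.not_ge h.2.1]
    rfl
  have hstep : ∀ j, st.len ≤ j → restrictFn x j ∈ T →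
      x j ∈ W ∧ restrictFn x (j + 1) ∈ T := by
    intro j hj hmem
    have h : restrictFn x j ∈ T ∧ st.Ext (restrictFn x j) :=
      ⟨hmem, ext_restrictFn_iff.2 ⟨hj, fun i hi => (hstem i hi).symm⟩⟩
    rw [restrictFn_add_one, hx j, dif_pos h]
    exact (hsnoc _ h.1 h.2).choose_spec
  have hbranch : x ∈ Branches κ T := by
    intro a
    induction a using WellFoundedLT.induction with
    | _ a ih =>
      intro ha
      rcases le_or_gt a st.len with hle | hlt
      · rw [restrictFn_congr fun i hi => hstem i (hi.trans_le hle)]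
        exact hst a hle
      rcases Ordinal.zero_or_succ_or_isSuccLimit a with rfl | ⟨b, rfl⟩ | hlim
      · exact absurd hlt zero_le.not_gt
      · have hb := Order.lt_succ b
        rw [Order.succ_eq_add_one]
        exact (hstep b (Order.lt_succ_iff.1 hlt) (ih b hb (hb.trans ha))).2
      · exact hlimit x a ha hlim fun b hb => ih b hb (hb.trans ha)
  exact ⟨x, hbranch, hstem, fun j hj hjκ => (hstep j hj (hbranch j hjκ)).1⟩

end Branches

def IsLaverStem (κ : Cardinal) (T : Set PreSeq) (st : PreSeq) : Prop :=
  st ∈ T ∧ (∀ t ∈ T, st.Ext t ∨ t.Ext st) ∧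
    ∀ t ∈ T, st.Ext t → ∃ c, IsClubIn c κ.ord ∧ ∀ α ∈ c, t.snoc α ∈ T

def subtreeAt (T : Set PreSeq) (u : PreSeq) : Set PreSeq := {s ∈ T | s.Ext u ∨ u.Ext s}

section LaverTree

variable {κ : Cardinal} {T : Set PreSeq} {st : PreSeq}

theorem IsLaverTree.exists_isLaverStem (hT : IsLaverTree κ T) : ∃ st, IsLaverStem κ T st :=
  hT.2.2.2.2

theorem IsLaverTree.len_lt (hT : IsLaverTree κ T) {s : PreSeq} (hs : s ∈ T) : s.len < κ.ord :=
  (hT.2.1 s hs).1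

theorem IsLaverStem.exists_snoc_mem {W : Set Ordinal} (hst : IsLaverStem κ T st)
    (hW : IsStatIn W κ.ord) {t : PreSeq} (ht : t ∈ T) (hext : st.Ext t) :
    ∃ α ∈ W, t.snoc α ∈ T := by
  obtain ⟨c, hc, hsnoc⟩ := hst.2.2 t ht hext
  obtain ⟨α, hαc, hαW⟩ := hW c hc
  exact ⟨α, hαW, hsnoc α hαc⟩

theorem IsLaverTree.incrBelow_of_mem_branches (hT : IsLaverTree κ T)
    (hκ : Order.IsSuccLimit κ.ord) {x : Ordinal → Ordinal} (hx : x ∈ Branches κ T) :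
    IncrBelow κ x := by
  intro i j hij hj
  have h := (hT.2.1 _ (hx (j + 1) (hκ.add_one_lt hj))).2.2 i j hij (lt_add_one j)
  rwa [restrictFn_val_of_lt (hij.trans (lt_add_one j)), restrictFn_val_of_lt (lt_add_one j)] at h

theorem IsLaverStem.exists_mem_branches {W : Set Ordinal} (hT : IsLaverTree κ T)
    (hκ : Order.IsSuccLimit κ.ord) (hst : IsLaverStem κ T st) (hW : IsStatIn W κ.ord) :
    ∃ x ∈ Branches κ T, IncrBelow κ x ∧ (∀ i < st.len, x i = st.val i) ∧
      ∀ j, st.len ≤ j → j < κ.ord → x j ∈ W := by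
  obtain ⟨x, hx, hstem, hxW⟩ := exists_mem_branches_of_forall_snoc hT.2.2.2.1
    (hT.2.2.1 st hst.1) fun t ht => hst.exists_snoc_mem hW ht
  exact ⟨x, hx, hT.incrBelow_of_mem_branches hκ hx, hstem, hxW⟩

theorem isLaverTree_subtreeAt (hT : IsLaverTree κ T) (hst : IsLaverStem κ T st) {u : PreSeq}
    (hu : u ∈ T) (hstu : st.Ext u) : IsLaverTree κ (subtreeAt T u) := by
  obtain ⟨-, hnode, hrestr, hlimit, -⟩ := hT
  have hu' : u ∈ subtreeAt T u := ⟨hu, Or.inl (.refl u)⟩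
  refine ⟨⟨u, hu'⟩, fun s hs => hnode s hs.1, ?_, ?_, u, hu', fun t ht => ht.2.symm, ?_⟩
  · rintro s ⟨hs, hsu⟩ a ha
    exact ⟨hrestr s hs a ha, ext_or_ext_restrictFn_iff.2 fun i hi hiu =>
      PreSeq.val_eq_of_ext_or_ext hsu (hi.trans_le ha) hiu⟩
  · intro x l hl hlim hx
    refine ⟨hlimit x l hl hlim fun a ha => (hx a ha).1,
      ext_or_ext_restrictFn_iff.2 fun i hi hiu => ?_⟩
    exact ext_or_ext_restrictFn_iff.1 (hx _ (hlim.add_one_lt hi)).2 i (lt_add_one i) hiu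
  · rintro t ⟨ht, -⟩ hut
    obtain ⟨c, hc, hsnoc⟩ := hst.2.2 t ht (hstu.trans hut)
    exact ⟨c, hc, fun α hα => ⟨hsnoc α hα, Or.inr (hut.trans (t.ext_snoc α))⟩⟩

theorem apply_eq_of_mem_branches_subtreeAt {u : PreSeq} (hu : u.len < κ.ord)
    {x : Ordinal → Ordinal} (hx : x ∈ Branches κ (subtreeAt T u)) {i : Ordinal}
    (hi : i < u.len) : x i = u.val i :=
  ext_or_ext_restrictFn_iff.1 (hx u.len hu).2 i hi hi

theorem IsLaverTree.exists_subtree_branches_inter_ASet_eq_empty {S : Set Ordinal}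
    (hT : IsLaverTree κ T) (hκ : Order.IsSuccLimit κ.ord)
    (hS : IsStatIn (Iio κ.ord \ S) κ.ord) {i : Ordinal} (hi : i < κ.ord) :
    ∃ T', IsLaverTree κ T' ∧ T' ⊆ T ∧ Branches κ T' ∩ ASet κ S i = ∅ := by
  obtain ⟨st, hst⟩ := hT.exists_isLaverStem
  obtain ⟨x, hx, -, hstem, hxS⟩ := hst.exists_mem_branches hT hκ hS
  set j := max i st.len + 1
  have hij : i < j := (le_max_left _ _).trans_lt (lt_add_one _)
  have hstj : st.len ≤ j := (le_max_right _ _).trans (lt_add_one _).le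
  have hj : j < κ.ord := hκ.add_one_lt (max_lt hi (hT.len_lt hst.1))
  have hu := hx (j + 1) (hκ.add_one_lt hj)
  have hstu : st.Ext (restrictFn x (j + 1)) :=
    ext_restrictFn_iff.2 ⟨hstj.trans (lt_add_one j).le, fun i hi => (hstem i hi).symm⟩
  refine ⟨_, isLaverTree_subtreeAt hT hst hu hstu, fun s hs => hs.1,
    eq_empty_iff_forall_notMem.2 ?_⟩
  rintro y ⟨hy, -, hyS⟩
  have hyx : y j = x j := (apply_eq_of_mem_branches_subtreeAt (hT.len_lt hu) hy
    (lt_add_one j)).trans (restrictFn_val_of_lt (lt_add_one j))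
  exact (hxS j hstj hj).2 (hyx ▸ hyS j hij hj)

theorem IsLaverTree.exists_mem_branches_mem_ASet {S : Set Ordinal} (hT : IsLaverTree κ T)
    (hκ : Order.IsSuccLimit κ.ord) (hS : IsStatIn S κ.ord) :
    ∃ x ∈ Branches κ T, ∃ i < κ.ord, x ∈ ASet κ S i := by
  obtain ⟨st, hst⟩ := hT.exists_isLaverStem
  obtain ⟨x, hx, hinc, -, hxS⟩ := hst.exists_mem_branches hT hκ hS
  exact ⟨x, hx, st.len, hT.len_lt hst.1, hinc, fun j hj => hxS j hj.le⟩

end LaverTree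

theorem isClubIn_Ico {β k : Ordinal} (hβ : β < k) : IsClubIn (Ico β k) k := by
  refine ⟨fun α hα => hα.2, fun l hl hlim hcof => ?_, fun a ha =>
    ⟨max a β, ⟨le_max_right _ _, max_lt ha hβ⟩, le_max_left _ _⟩⟩
  obtain ⟨b, hb, -, hbl⟩ := hcof 0 hlim.pos
  exact ⟨hb.1.trans hbl.le, hl⟩

theorem Cardinal.IsRegular.exists_lt_ord_forall_lt {κ : Cardinal} (hκ : κ.IsRegular)
    {o : Ordinal} (ho : o < κ.ord) {f : Ordinal → Ordinal} (hf : ∀ i < o, f i < κ.ord) :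
    ∃ β < κ.ord, ∀ i < o, f i < β := by
  refine ⟨⨆ i : Iio o, f i + 1, Ordinal.lift_iSup_add_one_lt_of_lt_cof ?_ fun i => hf i i.2,
    fun i hi => (lt_add_one (f i)).trans_le (Ordinal.le_iSup (fun i : Iio o => f i + 1) ⟨i, hi⟩)⟩
  rw [Cardinal.mk_Iio_ordinal, ← Ordinal.lift_cof, hκ.cof_ord, Cardinal.lift_lift,
    Cardinal.lift_lt]
  exact lt_ord.1 ho

def fullLaverTree (κ : Cardinal) : Set PreSeq :=
  {s | s.len < κ.ord ∧ s.Canonical ∧ s.Increasing ∧ ∀ i < s.len, s.val i < κ.ord}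

section FullLaverTree

variable {κ : Cardinal}

theorem restrictFn_mem_fullLaverTree_iff {x : Ordinal → Ordinal} {a : Ordinal} :
    restrictFn x a ∈ fullLaverTree κ ↔
      a < κ.ord ∧ (∀ i j, i < j → j < a → x i < x j) ∧ ∀ i < a, x i < κ.ord := by
  refine and_congr_right fun _ => ⟨fun h => ⟨fun i j hij hj => ?_, fun i hi => ?_⟩,
    fun h => ⟨fun i hi => if_neg hi.not_gt, fun i j hij (hj : j < a) => ?_,
      fun i (hi : i < a) => ?_⟩⟩
  · simpa only [restrictFn_val_of_lt hj, restrictFn_val_of_lt (hij.trans hj)]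
      using h.2.1 i j hij hj
  · simpa only [restrictFn_val_of_lt hi] using h.2.2 i hi
  · rw [restrictFn_val_of_lt hj, restrictFn_val_of_lt (hij.trans hj)]
    exact h.1 i j hij hj
  · rw [restrictFn_val_of_lt hi]
    exact h.2 i hi

theorem snoc_mem_fullLaverTree (hκ : Order.IsSuccLimit κ.ord) {t : PreSeq}
    (ht : t ∈ fullLaverTree κ) {α : Ordinal} (hα : α < κ.ord) (htα : ∀ i < t.len, t.val i < α) :
    t.snoc α ∈ fullLaverTree κ := by
  obtain ⟨hlen, -, hinc, hval⟩ := ht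
  refine ⟨hκ.add_one_lt hlen, fun i hi => t.snoc_val_of_len_lt α (Order.add_one_le_iff.1 hi),
    fun i j hij hj => ?_, fun i hi => ?_⟩
  · rcases (Order.lt_add_one_iff.1 hj).lt_or_eq with hj | rfl
    · rw [t.snoc_val_of_lt α hj, t.snoc_val_of_lt α (hij.trans hj)]
      exact hinc i j hij hj
    · rw [t.snoc_val_len, t.snoc_val_of_lt α hij]
      exact htα i hij
  · rcases (Order.lt_add_one_iff.1 hi).lt_or_eq with hi | rfl
    · rw [t.snoc_val_of_lt α hi]
      exact hval i hi
    · rwa [t.snoc_val_len]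

theorem isLaverTree_fullLaverTree (hκ : κ.IsRegular) : IsLaverTree κ (fullLaverTree κ) := by
  have hlim := isSuccLimit_ord hκ.aleph0_le
  have hroot : restrictFn (fun _ => 0) 0 ∈ fullLaverTree κ :=
    restrictFn_mem_fullLaverTree_iff.2 ⟨hlim.pos, by simp, by simp⟩
  refine ⟨⟨_, hroot⟩, fun s hs => ⟨hs.1, hs.2.1, hs.2.2.1⟩, ?_, ?_, _, hroot,
    fun t _ => Or.inl ⟨zero_le, by simp⟩, ?_⟩
  · rintro s ⟨hlen, -, hinc, hval⟩ a ha
    exact restrictFn_mem_fullLaverTree_iff.2 ⟨ha.trans_lt hlen,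
      fun i j hij hj => hinc i j hij (hj.trans_le ha), fun i hi => hval i (hi.trans_le ha)⟩
  · intro x l hl hlim hx
    refine restrictFn_mem_fullLaverTree_iff.2 ⟨hl, fun i j hij hj => ?_, fun i hi => ?_⟩
    · exact (restrictFn_mem_fullLaverTree_iff.1 (hx _ (hlim.add_one_lt hj))).2.1 i j hij
        (lt_add_one j)
    · exact (restrictFn_mem_fullLaverTree_iff.1 (hx _ (hlim.add_one_lt hi))).2.2 i
        (lt_add_one i)
  · intro t ht _
    obtain ⟨β, hβ, htβ⟩ := hκ.exists_lt_ord_forall_lt ht.1 ht.2.2.2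
    exact ⟨Ico β κ.ord, isClubIn_Ico hβ, fun α hα =>
      snoc_mem_fullLaverTree hlim ht hα.2 fun i hi => (htβ i hi).trans_le hα.1⟩

end FullLaverTree

theorem laver_null_not_ideal_general (κ : Cardinal) (hreg : κ.IsRegular)
    (S : Set Ordinal)
    (hstat : IsStatIn S κ.ord) (hcostat : IsStatIn (Set.Iio κ.ord \ S) κ.ord) :
    (∀ T, IsLaverTree κ T → ∀ i < κ.ord,
      ∃ T', IsLaverTree κ T' ∧ T' ⊆ T ∧ Branches κ T' ∩ ASet κ S i = ∅) ∧
    (∀ T, IsLaverTree κ T →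
      ∃ x ∈ Branches κ T, x ∈ ⋃ i ∈ Set.Iio κ.ord, ASet κ S i) ∧
    ¬ (∀ T, IsLaverTree κ T → ∃ T', IsLaverTree κ T' ∧ T' ⊆ T ∧
        Branches κ T' ∩ (⋃ i ∈ Set.Iio κ.ord, ASet κ S i) = ∅) := by
  have hκ : Order.IsSuccLimit κ.ord := isSuccLimit_ord hreg.aleph0_le
  have hbranch : ∀ T, IsLaverTree κ T →
      ∃ x ∈ Branches κ T, x ∈ ⋃ i ∈ Set.Iio κ.ord, ASet κ S i := fun T hT => by
    obtain ⟨x, hx, i, hi, hxA⟩ := hT.exists_mem_branches_mem_ASet hκ hstat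
    exact ⟨x, hx, mem_biUnion hi hxA⟩
  refine ⟨fun T hT i hi => hT.exists_subtree_branches_inter_ASet_eq_empty hκ hcostat hi,
    hbranch, fun hnull => ?_⟩
  obtain ⟨T', hT', -, hdisj⟩ := hnull _ (isLaverTree_fullLaverTree hreg)
  obtain ⟨x, hx, hxA⟩ := hbranch T' hT'
  exact (hdisj ▸ ⟨hx, hxA⟩ : x ∈ (∅ : Set (Ordinal → Ordinal)))

/-- (a) each `A_i` is Laver-null, (b) every κ-Laver tree has a branch in
`A = ⋃_{i<κ} A_i`, hence (c) `A` is not Laver-null: the κ-ideal generated by the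
Laver-null sets is strictly larger than the family of Laver-null sets. -/
theorem laver_null_not_ideal (κ : Cardinal) (hreg : κ.IsRegular)
    (hunc : Cardinal.aleph0 < κ) (S : Set Ordinal) (hS : S ⊆ Set.Iio κ.ord)
    (hstat : IsStatIn S κ.ord) (hcostat : IsStatIn (Set.Iio κ.ord \ S) κ.ord) :
    (∀ T, IsLaverTree κ T → ∀ i < κ.ord,
      ∃ T', IsLaverTree κ T' ∧ T' ⊆ T ∧ Branches κ T' ∩ ASet κ S i = ∅) ∧
    (∀ T, IsLaverTree κ T →
      ∃ x ∈ Branches κ T, x ∈ ⋃ i ∈ Set.Iio κ.ord, ASet κ S i) ∧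
    ¬ (∀ T, IsLaverTree κ T → ∃ T', IsLaverTree κ T' ∧ T' ⊆ T ∧
        Branches κ T' ∩ (⋃ i ∈ Set.Iio κ.ord, ASet κ S i) = ∅) :=
  laver_null_not_ideal_general κ hreg S hstat hcostat
end

section
/- Let κ be an uncountable regular cardinal and let T ⊆ 2^{<κ} be a κ-Sacks tree. Fix a sequence (X_i)_{i<κ} of subsets of 2^κ such that for every i < κ and every s ∈ T there exists t ∈ T with s ⊆ t and [T↑t] ∩ X_i = ∅. Then there exists a branch x ∈ [T] with x ∉ X_i for all i < κ and such that {α < κ : x(α) = 0} contains a club of κ. -/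
open Cardinal Set

/-- A binary sequence of ordinal length. -/
structure PreSeq2 where
  len : Ordinal
  val : Ordinal → Bool

def PreSeq2.Canonical (s : PreSeq2) : Prop := ∀ i, s.len ≤ i → s.val i = false

def PreSeq2.Ext (s t : PreSeq2) : Prop := s.len ≤ t.len ∧ ∀ i < s.len, s.val i = t.val i

noncomputable def restrictFn2 (x : Ordinal → Bool) (a : Ordinal) : PreSeq2 :=
  ⟨a, fun i => if i < a then x i else false⟩

noncomputable def PreSeq2.snoc (s : PreSeq2) (b : Bool) : PreSeq2 :=
  ⟨s.len + 1, fun i => if i < s.len then s.val i else if i = s.len then b else false⟩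

/-- `t` is a splitting node of `T`. -/
def Splitting (T : Set PreSeq2) (t : PreSeq2) : Prop :=
  PreSeq2.snoc t false ∈ T ∧ PreSeq2.snoc t true ∈ T

/-- κ-Sacks tree: nonempty pruned `<κ`-closed tree of canonical binary sequences of
length `< κ`, in which every node has a splitting extension and unions of increasing
`<κ`-sequences of splitting nodes are splitting. -/
def IsSacks (κ : Cardinal) (T : Set PreSeq2) : Prop :=
  T.Nonempty ∧
  (∀ s ∈ T, s.len < κ.ord ∧ s.Canonical) ∧
  (∀ s ∈ T, ∀ a ≤ s.len, restrictFn2 s.val a ∈ T) ∧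
  (∀ s ∈ T, ∃ t ∈ T, PreSeq2.Ext s t ∧ s.len < t.len) ∧
  (∀ x : Ordinal → Bool, ∀ l, l < κ.ord → Order.IsSuccLimit l →
    (∀ a < l, restrictFn2 x a ∈ T) → restrictFn2 x l ∈ T) ∧
  (∀ s ∈ T, ∃ t ∈ T, PreSeq2.Ext s t ∧ Splitting T t) ∧
  (∀ x : Ordinal → Bool, ∀ l, l < κ.ord → Order.IsSuccLimit l →
    (∀ a < l, ∃ b, a ≤ b ∧ b < l ∧ Splitting T (restrictFn2 x b)) →
    Splitting T (restrictFn2 x l))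

def Branches2 (κ : Cardinal) (T : Set PreSeq2) : Set (Ordinal → Bool) :=
  { x | ∀ a < κ.ord, restrictFn2 x a ∈ T }

/-- The restriction `T↑t = {s ∈ T : s ⊆ t or t ⊆ s}`. -/
def up2 (T : Set PreSeq2) (t : PreSeq2) : Set PreSeq2 :=
  { s ∈ T | PreSeq2.Ext s t ∨ PreSeq2.Ext t s }

/-!
Build a ⊆-increasing sequence of nodes `t i` (`i < κ`) of `T`. At stage `i` take the union of
the earlier nodes (in `T` by `<κ`-closure; its length stays below `κ` by regularity), extend it
to a splitting node `u i`, pass to `u i ⌢ 0`, and extend that to a node whose cone avoids `X i`.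
The union `x` of the `t i` is a branch of `T` avoiding every `X i`, and `x` vanishes at each
level `|u i|`. At a limit stage the union is a limit of the splitting nodes `u j`, hence itself
splitting, so `u i` is the union: `i ↦ |u i|` is strictly increasing and continuous, and its
range is a club.
-/

open Order

namespace PreSeq2

lemma Ext.refl (s : PreSeq2) : s.Ext s := ⟨le_rfl, fun _ _ => rfl⟩

lemma Ext.trans {s t u : PreSeq2} (hst : s.Ext t) (htu : t.Ext u) : s.Ext u :=
  ⟨hst.1.trans htu.1, fun i hi => (hst.2 i hi).trans (htu.2 i (hi.trans_le hst.1))⟩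

lemma eq_of_ext {s t : PreSeq2} (hs : s.Canonical) (ht : t.Canonical) (hst : s.Ext t)
    (hlen : t.len ≤ s.len) : s = t := by
  obtain ⟨a, v⟩ := s
  obtain ⟨b, w⟩ := t
  obtain rfl : a = b := le_antisymm hst.1 hlen
  congr 1
  funext i
  by_cases hi : i < a
  · exact hst.2 i hi
  · exact (hs i (not_lt.1 hi)).trans (ht i (not_lt.1 hi)).symm

lemma Ext.of_snoc {s t : PreSeq2} {b : Bool} (h : (s.snoc b).Ext t) :
    s.Ext t ∧ s.len < t.len ∧ t.val s.len = b := by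
  have hlt : s.len < (s.snoc b).len := lt_add_one s.len
  refine ⟨⟨hlt.le.trans h.1, fun i hi => ?_⟩, hlt.trans_le h.1, ?_⟩
  · rw [← h.2 i (hi.trans hlt)]
    exact (if_pos hi).symm
  · rw [← h.2 _ hlt]
    simp [snoc]

end PreSeq2

lemma restrictFn2_canonical (x : Ordinal → Bool) (a : Ordinal) : (restrictFn2 x a).Canonical :=
  fun _ hi => if_neg (not_lt.2 hi)

lemma restrictFn2_congr {f g : Ordinal → Bool} {a : Ordinal} (h : ∀ β < a, f β = g β) :
    restrictFn2 f a = restrictFn2 g a := by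
  simp only [restrictFn2, PreSeq2.mk.injEq, true_and]
  funext β
  split_ifs with hβ
  exacts [h β hβ, rfl]

lemma restrictFn2_ext_of_le (x : Ordinal → Bool) {a b : Ordinal} (hab : a ≤ b) :
    (restrictFn2 x a).Ext (restrictFn2 x b) :=
  ⟨hab, fun i (hi : i < a) => by simp [restrictFn2, hi, hi.trans_le hab]⟩

lemma PreSeq2.Ext.restrictFn2_of_le {s t : PreSeq2} (h : s.Ext t) {a : Ordinal}
    (ha : a ≤ s.len) : restrictFn2 t.val a = restrictFn2 s.val a :=
  restrictFn2_congr fun β hβ => (h.2 β (hβ.trans_le ha)).symm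

lemma PreSeq2.Ext.restrictFn2_len {s t : PreSeq2} (h : s.Ext t) (hs : s.Canonical) :
    restrictFn2 t.val s.len = s := by
  rw [h.restrictFn2_of_le le_rfl]
  exact PreSeq2.eq_of_ext (restrictFn2_canonical _ _) hs
    ⟨le_rfl, fun i hi => if_pos hi⟩ le_rfl

lemma mem_branches2_up2 {κ : Cardinal} {T : Set PreSeq2} {x : Ordinal → Bool} {u : PreSeq2}
    (hx : x ∈ Branches2 κ T) (hxu : restrictFn2 x u.len = u) : x ∈ Branches2 κ (up2 T u) := by
  intro a ha
  refine ⟨hx a ha, ?_⟩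
  rw [← hxu]
  rcases le_total a u.len with h | h
  exacts [.inl (restrictFn2_ext_of_le x h), .inr (restrictFn2_ext_of_le x h)]

namespace IsSacks

variable {κ : Cardinal} {T : Set PreSeq2}

lemma len_lt (hT : IsSacks κ T) {s : PreSeq2} (hs : s ∈ T) : s.len < κ.ord := (hT.2.1 s hs).1

lemma canonical (hT : IsSacks κ T) {s : PreSeq2} (hs : s ∈ T) : s.Canonical := (hT.2.1 s hs).2

lemma restrictFn2_mem (hT : IsSacks κ T) {s : PreSeq2} (hs : s ∈ T) {a : Ordinal}
    (ha : a ≤ s.len) : restrictFn2 s.val a ∈ T :=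
  hT.2.2.1 s hs a ha

lemma exists_ext_splitting (hT : IsSacks κ T) {s : PreSeq2} (hs : s ∈ T) :
    ∃ t ∈ T, s.Ext t ∧ Splitting T t :=
  hT.2.2.2.2.2.1 s hs

lemma mem_of_cofinal (hT : IsSacks κ T) {s : PreSeq2} (hs : s.Canonical)
    (hlen : s.len < κ.ord) (hlim : IsSuccLimit s.len)
    (h : ∀ a < s.len, ∃ u ∈ T, u.Ext s ∧ a ≤ u.len) : s ∈ T := by
  have := hT.2.2.2.2.1 s.val s.len hlen hlim fun a ha => by
    obtain ⟨u, hu, hus, hau⟩ := h a ha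
    rw [hus.restrictFn2_of_le hau]
    exact hT.restrictFn2_mem hu hau
  rwa [(PreSeq2.Ext.refl s).restrictFn2_len hs] at this

lemma splitting_of_cofinal (hT : IsSacks κ T) {s : PreSeq2} (hs : s.Canonical)
    (hlen : s.len < κ.ord) (hlim : IsSuccLimit s.len)
    (h : ∀ a < s.len, ∃ u ∈ T, Splitting T u ∧ u.Ext s ∧ a ≤ u.len ∧ u.len < s.len) :
    Splitting T s := by
  have := hT.2.2.2.2.2.2 s.val s.len hlen hlim fun a ha => by
    obtain ⟨u, hu, hsplit, hus, hau, hlt⟩ := h a ha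
    exact ⟨u.len, hau, hlt, by rwa [hus.restrictFn2_len (hT.canonical hu)]⟩
  rwa [(PreSeq2.Ext.refl s).restrictFn2_len hs] at this

end IsSacks

instance : Inhabited PreSeq2 := ⟨⟨0, fun _ => false⟩⟩

def IsExtChain (g : Ordinal → PreSeq2) (k : Ordinal) : Prop :=
  ∀ ⦃i j⦄, i < j → j < k → (g i).Ext (g j)

lemma IsExtChain.mono {g : Ordinal → PreSeq2} {k k' : Ordinal} (hg : IsExtChain g k)
    (hk : k' ≤ k) : IsExtChain g k' :=
  fun _ _ hij hj => hg hij (hj.trans_le hk)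

open Classical in
noncomputable def unionBelow (g : Ordinal.{0} → PreSeq2) (k : Ordinal.{0}) : PreSeq2 :=
  ⟨⨆ j : Iio k, (g j).len,
    fun α => decide (∃ j < k, α < (g j).len ∧ (g j).val α = true)⟩

section unionBelow

variable {g : Ordinal → PreSeq2} {k j : Ordinal}

lemma len_le_unionBelow_len (hj : j < k) : (g j).len ≤ (unionBelow g k).len :=
  Ordinal.le_iSup (fun j : Iio k => (g j).len) ⟨j, hj⟩

lemma exists_lt_len_of_lt_unionBelow_len {a : Ordinal} (ha : a < (unionBelow g k).len) :
    ∃ j < k, a < (g j).len := by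
  obtain ⟨⟨j, hj⟩, haj⟩ := Ordinal.lt_iSup_iff.1 ha
  exact ⟨j, hj, haj⟩

lemma unionBelow_canonical : (unionBelow g k).Canonical := by
  intro α hα
  simp only [unionBelow, decide_eq_false_iff_not, not_exists, not_and]
  exact fun j hj hαj => absurd (hαj.trans_le (len_le_unionBelow_len hj)) (not_lt.2 hα)

lemma unionBelow_val (hg : IsExtChain g k) (hj : j < k) {β : Ordinal} (hβ : β < (g j).len) :
    (unionBelow g k).val β = (g j).val β := by
  have hcomp : ∀ i < k, β < (g i).len → (g i).val β = (g j).val β := fun i hi hβi => by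
    rcases lt_trichotomy i j with h | rfl | h
    exacts [(hg h hj).2 β hβi, rfl, ((hg h hi).2 β hβ).symm]
  classical
  rw [unionBelow, Bool.eq_iff_iff, decide_eq_true_iff]
  exact ⟨fun ⟨i, hi, hβi, hv⟩ => hcomp i hi hβi ▸ hv, fun hv => ⟨j, hj, hβ, hv⟩⟩

lemma ext_unionBelow (hg : IsExtChain g k) (hj : j < k) : (g j).Ext (unionBelow g k) :=
  ⟨len_le_unionBelow_len hj, fun _ hβ => (unionBelow_val hg hj hβ).symm⟩

lemma unionBelow_add_one (hg : IsExtChain g (j + 1)) (hc : (g j).Canonical) :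
    unionBelow g (j + 1) = g j := by
  refine (PreSeq2.eq_of_ext hc unionBelow_canonical (ext_unionBelow hg (lt_add_one j)) ?_).symm
  refine Ordinal.iSup_le fun ⟨i, hi⟩ => ?_
  rcases (Order.lt_add_one_iff.1 (mem_Iio.1 hi)).lt_or_eq with h | rfl
  exacts [(hg h (lt_add_one j)).1, le_rfl]

lemma unionBelow_congr {g' : Ordinal → PreSeq2} (h : ∀ j < k, g j = g' j) :
    unionBelow g k = unionBelow g' k := by
  have hfun : (fun j : Iio k => (g j).len) = fun j : Iio k => (g' j).len :=
    funext fun j => by rw [h j j.2]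
  simp only [unionBelow, hfun, PreSeq2.mk.injEq, true_and]
  funext α
  exact decide_eq_decide.2 ⟨fun ⟨i, hi, hα⟩ => ⟨i, hi, h i hi ▸ hα⟩,
    fun ⟨i, hi, hα⟩ => ⟨i, hi, (h i hi).symm ▸ hα⟩⟩

lemma len_lt_unionBelow_len (hk : IsSuccLimit k)
    (hlen : StrictMonoOn (fun j => (g j).len) (Iio k)) (hj : j < k) :
    (g j).len < (unionBelow g k).len :=
  (hlen hj (hk.succ_lt hj) (lt_succ j)).trans_le (len_le_unionBelow_len (hk.succ_lt hj))

lemma isSuccLimit_unionBelow_len (hk : IsSuccLimit k)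
    (hlen : StrictMonoOn (fun j => (g j).len) (Iio k)) : IsSuccLimit (unionBelow g k).len := by
  refine Ordinal.isSuccLimit_iff.2 ⟨(len_lt_unionBelow_len hk hlen hk.pos).ne_bot, ?_⟩
  refine isSuccPrelimit_of_succ_lt fun a ha => ?_
  obtain ⟨j, hj, haj⟩ := exists_lt_len_of_lt_unionBelow_len ha
  exact (succ_le_of_lt haj).trans_lt (len_lt_unionBelow_len hk hlen hj)

lemma unionBelow_len_lt_ord {κ : Cardinal} (hκ : κ.IsRegular) (hk : k < κ.ord)
    (h : ∀ j < k, (g j).len < κ.ord) : (unionBelow g k).len < κ.ord := by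
  apply Ordinal.lift_iSup_lt_of_lt_cof _ fun j : Iio k => h j j.2
  rwa [← Ordinal.lift_cof, hκ.cof_ord, Cardinal.mk_Iio_ordinal, Cardinal.lift_lift,
    Cardinal.lift_lt, ← Cardinal.lt_ord]

end unionBelow

lemma IsSacks.unionBelow_mem {κ : Cardinal} {T : Set PreSeq2} (hT : IsSacks κ T)
    (hκ : κ.IsRegular) {g : Ordinal → PreSeq2} {k : Ordinal} (hk : k < κ.ord)
    (hg : IsExtChain g k) (hlen : StrictMonoOn (fun j => (g j).len) (Iio k))
    (hmem : ∀ j < k, g j ∈ T) : unionBelow g k ∈ T := by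
  rcases Ordinal.zero_or_succ_or_isSuccLimit k with rfl | ⟨j, rfl⟩ | hlim
  · obtain ⟨s, hs⟩ := hT.1
    have hlen0 : (unionBelow g 0).len = 0 :=
      nonpos_iff_eq_zero.1 <| Ordinal.iSup_le fun i : Iio 0 => absurd i.2 (not_lt_zero (a := i.1))
    convert hT.restrictFn2_mem hs (zero_le (a := s.len)) using 1
    refine PreSeq2.eq_of_ext unionBelow_canonical (restrictFn2_canonical _ _) ?_ hlen0.ge
    exact ⟨hlen0.le, fun i hi => absurd (hlen0 ▸ hi) (not_lt_zero (a := i))⟩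
  · rw [succ_eq_add_one] at hg hmem ⊢
    rw [unionBelow_add_one hg (hT.canonical (hmem j (lt_add_one j)))]
    exact hmem j (lt_add_one j)
  · refine hT.mem_of_cofinal unionBelow_canonical
      (unionBelow_len_lt_ord hκ hk fun j hj => hT.len_lt (hmem j hj))
      (isSuccLimit_unionBelow_len hlim hlen) fun a ha => ?_
    obtain ⟨j, hj, haj⟩ := exists_lt_len_of_lt_unionBelow_len ha
    exact ⟨g j, hmem j hj, ext_unionBelow hg hj, haj.le⟩

noncomputable def recChain (step : Ordinal → PreSeq2 → PreSeq2) : Ordinal.{0} → PreSeq2 :=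
  Ordinal.lt_wf.fix fun i g =>
    step i (unionBelow (fun j => if h : j < i then g j h else default) i)

lemma recChain_eq (step : Ordinal → PreSeq2 → PreSeq2) (i : Ordinal) :
    recChain step i = step i (unionBelow (recChain step) i) := by
  rw [recChain, Ordinal.lt_wf.fix_eq]
  exact congrArg (step i) (unionBelow_congr fun j hj => dif_pos hj)

lemma IsSacks.recChain_spec {κ : Cardinal} {T : Set PreSeq2} (hT : IsSacks κ T)
    (hκ : κ.IsRegular) {step : Ordinal → PreSeq2 → PreSeq2}
    (hstep : ∀ i < κ.ord, ∀ s ∈ T,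
      step i s ∈ T ∧ s.Ext (step i s) ∧ s.len < (step i s).len) :
    (∀ i < κ.ord, recChain step i ∈ T) ∧ IsExtChain (recChain step) κ.ord ∧
      StrictMonoOn (fun i => (recChain step i).len) (Iio κ.ord) := by
  set g := recChain step
  have key : ∀ i < κ.ord,
      g i ∈ T ∧ ∀ j < i, (g j).Ext (g i) ∧ (g j).len < (g i).len := by
    intro i
    induction i using WellFoundedLT.induction with
    | _ i ih =>
    intro hi
    have hg : IsExtChain g i := fun j l hjl hl => ((ih l hl (hl.trans hi)).2 j hjl).1
    have hlen : StrictMonoOn (fun j => (g j).len) (Iio i) :=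
      fun j _ l hl hjl => ((ih l hl (hl.trans hi)).2 j hjl).2
    have hB := hT.unionBelow_mem hκ hi hg hlen fun j hj => (ih j hj (hj.trans hi)).1
    obtain ⟨hmem, hext, hlt⟩ := hstep i hi _ hB
    rw [← recChain_eq step i] at hmem hext hlt
    exact ⟨hmem, fun j hj => ⟨(ext_unionBelow hg hj).trans hext,
      (len_le_unionBelow_len hj).trans_lt hlt⟩⟩
  exact ⟨fun i hi => (key i hi).1, fun j i hji hi => ((key i hi).2 j hji).1,
    fun j _ i hi hji => ((key i hi).2 j hji).2⟩

lemma StrictMonoOn.le_apply_of_lt {α : Type*} [LinearOrder α] [WellFoundedLT α]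
    {f : α → α} {k : α} (hf : StrictMonoOn f (Iio k)) {a : α} (ha : a < k) : a ≤ f a := by
  induction a using WellFoundedLT.induction with
  | _ a ih =>
  by_contra! hfa
  have hfk : f a < k := hfa.trans ha
  exact (hf hfk ha hfa).not_ge (ih (f a) hfa hfk)

lemma isClubIn_image_Iio_s8 {M : Ordinal → Ordinal} {k : Ordinal} (hmono : StrictMonoOn M (Iio k))
    (hlt : ∀ i < k, M i < k) (hcont : ∀ l < k, IsSuccLimit l → IsLUB (M '' Iio l) (M l)) :
    IsClubIn (M '' Iio k) k := by
  refine ⟨?_, fun l hl hlim hcof => ?_, fun a ha => ⟨M a, mem_image_of_mem M ha,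
    hmono.le_apply_of_lt ha⟩⟩
  · rintro _ ⟨i, hi, rfl⟩
    exact hlt i hi
  -- `lam` is the least index whose value reaches `l`; closure forces `lam` to be a limit.
  obtain ⟨lam, hlam, hmin⟩ : ∃ lam, l ≤ M lam ∧ ∀ j, l ≤ M j → lam ≤ j :=
    ⟨sInf {j | l ≤ M j}, csInf_mem (s := {j | l ≤ M j}) ⟨l, hmono.le_apply_of_lt hl⟩,
      fun j hj => csInf_le' hj⟩
  have hlamk : lam < k := (hmin l (hmono.le_apply_of_lt hl)).trans_lt hl
  have hbelow : ∀ j < lam, M j < l := fun j hj => not_le.1 fun h => (hmin j h).not_gt hj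
  have hindex : ∀ j < k, M j < l → j < lam := fun j hj hjl =>
    not_le.1 fun h => (hlam.trans (hmono.monotoneOn hlamk hj h)).not_gt hjl
  rcases Ordinal.zero_or_succ_or_isSuccLimit lam with rfl | ⟨j, rfl⟩ | hlamlim
  · obtain ⟨_, ⟨i, hi, rfl⟩, -, hil⟩ := hcof 0 hlim.pos
    exact absurd (hindex i hi hil) (not_lt_zero (a := i))
  · have hj : j < succ j := lt_succ j
    obtain ⟨_, ⟨i, hi, rfl⟩, hji, hil⟩ := hcof (succ (M j)) (hlim.succ_lt (hbelow j hj))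
    have hij : M i ≤ M j :=
      hmono.monotoneOn hi (hj.trans hlamk) (lt_succ_iff.1 (hindex i hi hil))
    exact absurd (hji.trans hij) (not_le.2 (lt_succ (M j)))
  · have hle : M lam ≤ l :=
      (hcont lam hlamk hlamlim).2 fun _ ⟨j, hj, hjl⟩ => hjl ▸ (hbelow j hj).le
    exact ⟨lam, hlamk, le_antisymm hle hlam⟩

lemma IsSacks.unionBelow_val_mem_branches2 {κ : Cardinal} {T : Set PreSeq2} (hT : IsSacks κ T)
    {g : Ordinal → PreSeq2} (hg : IsExtChain g κ.ord)
    (hlen : StrictMonoOn (fun j => (g j).len) (Iio κ.ord)) (hmem : ∀ j < κ.ord, g j ∈ T) :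
    (unionBelow g κ.ord).val ∈ Branches2 κ T := by
  intro a ha
  have hag : a ≤ (g a).len := hlen.le_apply_of_lt ha
  rw [(ext_unionBelow hg ha).restrictFn2_of_le hag]
  exact hT.restrictFn2_mem (hmem a ha) hag

section Fusion

variable {κ : Cardinal} {T : Set PreSeq2} {X : Ordinal → Set (Ordinal → Bool)}

def Avoidable (κ : Cardinal) (T : Set PreSeq2) (X : Ordinal → Set (Ordinal → Bool)) : Prop :=
  ∀ i < κ.ord, ∀ s ∈ T, ∃ t ∈ T, s.Ext t ∧ Branches2 κ (up2 T t) ∩ X i = ∅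

open Classical in
noncomputable def splitExt (T : Set PreSeq2) (s : PreSeq2) : PreSeq2 :=
  if Splitting T s then s else Classical.epsilon fun u => u ∈ T ∧ s.Ext u ∧ Splitting T u

lemma splitExt_of_splitting {s : PreSeq2} (h : Splitting T s) : splitExt T s = s := if_pos h

lemma IsSacks.splitExt_spec (hT : IsSacks κ T) {s : PreSeq2} (hs : s ∈ T) :
    splitExt T s ∈ T ∧ s.Ext (splitExt T s) ∧ Splitting T (splitExt T s) := by
  by_cases h : Splitting T s
  · rw [splitExt_of_splitting h]
    exact ⟨hs, .refl s, h⟩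
  · rw [splitExt, if_neg h]
    exact Classical.epsilon_spec (hT.exists_ext_splitting hs)

noncomputable def fusionStep (κ : Cardinal) (T : Set PreSeq2)
    (X : Ordinal → Set (Ordinal → Bool)) (i : Ordinal) (s : PreSeq2) : PreSeq2 :=
  Classical.epsilon fun u =>
    u ∈ T ∧ ((splitExt T s).snoc false).Ext u ∧ Branches2 κ (up2 T u) ∩ X i = ∅

lemma IsSacks.fusionStep_spec (hT : IsSacks κ T) (hX : Avoidable κ T X) {i : Ordinal}
    (hi : i < κ.ord) {s : PreSeq2} (hs : s ∈ T) :
    fusionStep κ T X i s ∈ T ∧ ((splitExt T s).snoc false).Ext (fusionStep κ T X i s) ∧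
      Branches2 κ (up2 T (fusionStep κ T X i s)) ∩ X i = ∅ :=
  Classical.epsilon_spec (hX i hi _ (hT.splitExt_spec hs).2.2.1)

noncomputable def fusionSeq (κ : Cardinal) (T : Set PreSeq2)
    (X : Ordinal → Set (Ordinal → Bool)) : Ordinal → PreSeq2 :=
  recChain (fusionStep κ T X)

noncomputable def fusionMark (κ : Cardinal) (T : Set PreSeq2)
    (X : Ordinal → Set (Ordinal → Bool)) (i : Ordinal) : Ordinal :=
  (splitExt T (unionBelow (fusionSeq κ T X) i)).len

lemma IsSacks.fusionSeq_spec (hT : IsSacks κ T) (hκ : κ.IsRegular) (hX : Avoidable κ T X) :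
    (∀ i < κ.ord, fusionSeq κ T X i ∈ T) ∧ IsExtChain (fusionSeq κ T X) κ.ord ∧
      StrictMonoOn (fun i => (fusionSeq κ T X i).len) (Iio κ.ord) := by
  refine hT.recChain_spec hκ fun i hi s hs => ?_
  obtain ⟨hmem, hext, -⟩ := hT.fusionStep_spec hX hi hs
  obtain ⟨-, hsplit, -⟩ := hT.splitExt_spec hs
  obtain ⟨hext', hlt, -⟩ := hext.of_snoc
  exact ⟨hmem, hsplit.trans hext', hsplit.1.trans_lt hlt⟩

lemma IsSacks.unionBelow_fusionSeq_mem (hT : IsSacks κ T) (hκ : κ.IsRegular)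
    (hX : Avoidable κ T X) {i : Ordinal} (hi : i < κ.ord) :
    unionBelow (fusionSeq κ T X) i ∈ T :=
  have ⟨hmem, hg, hlen⟩ := hT.fusionSeq_spec hκ hX
  hT.unionBelow_mem hκ hi (hg.mono hi.le) (hlen.mono (Iio_subset_Iio hi.le))
    fun j hj => hmem j (hj.trans hi)

lemma IsSacks.splitExt_ext_fusionSeq (hT : IsSacks κ T) (hκ : κ.IsRegular)
    (hX : Avoidable κ T X) {i : Ordinal} (hi : i < κ.ord) :
    (splitExt T (unionBelow (fusionSeq κ T X) i)).Ext (fusionSeq κ T X i) ∧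
      fusionMark κ T X i < (fusionSeq κ T X i).len ∧
      (fusionSeq κ T X i).val (fusionMark κ T X i) = false := by
  rw [fusionSeq, recChain_eq, ← fusionSeq]
  exact (hT.fusionStep_spec hX hi (hT.unionBelow_fusionSeq_mem hκ hX hi)).2.1.of_snoc

lemma IsSacks.fusionSeq_avoids (hT : IsSacks κ T) (hκ : κ.IsRegular)
    (hX : Avoidable κ T X) {i : Ordinal} (hi : i < κ.ord) :
    Branches2 κ (up2 T (fusionSeq κ T X i)) ∩ X i = ∅ := by
  rw [fusionSeq, recChain_eq, ← fusionSeq]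
  exact (hT.fusionStep_spec hX hi (hT.unionBelow_fusionSeq_mem hκ hX hi)).2.2

lemma IsSacks.len_fusionSeq_le_fusionMark (hT : IsSacks κ T) (hκ : κ.IsRegular)
    (hX : Avoidable κ T X) {i j : Ordinal} (hji : j < i) (hi : i < κ.ord) :
    (fusionSeq κ T X j).len ≤ fusionMark κ T X i :=
  (len_le_unionBelow_len hji).trans
    (hT.splitExt_spec (hT.unionBelow_fusionSeq_mem hκ hX hi)).2.1.1

lemma IsSacks.fusionMark_strictMonoOn (hT : IsSacks κ T) (hκ : κ.IsRegular)
    (hX : Avoidable κ T X) : StrictMonoOn (fusionMark κ T X) (Iio κ.ord) :=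
  fun _ hj _ hi hji => (hT.splitExt_ext_fusionSeq hκ hX hj).2.1.trans_le
    (hT.len_fusionSeq_le_fusionMark hκ hX hji hi)

lemma IsSacks.fusionMark_lt_ord (hT : IsSacks κ T) (hκ : κ.IsRegular)
    (hX : Avoidable κ T X) {i : Ordinal} (hi : i < κ.ord) : fusionMark κ T X i < κ.ord :=
  (hT.splitExt_ext_fusionSeq hκ hX hi).2.1.trans
    (hT.len_lt ((hT.fusionSeq_spec hκ hX).1 i hi))

-- At a limit stage the union of the earlier nodes is already splitting, so `splitExt` fixes it.
lemma IsSacks.isLUB_fusionMark (hT : IsSacks κ T) (hκ : κ.IsRegular)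
    (hX : Avoidable κ T X) {l : Ordinal} (hl : l < κ.ord) (hlim : IsSuccLimit l) :
    IsLUB (fusionMark κ T X '' Iio l) (fusionMark κ T X l) := by
  obtain ⟨hmem, hg, hlen⟩ := hT.fusionSeq_spec hκ hX
  set c := fusionSeq κ T X
  have hsplit : Splitting T (unionBelow c l) := by
    refine hT.splitting_of_cofinal unionBelow_canonical
      (hT.len_lt (hT.unionBelow_fusionSeq_mem hκ hX hl))
      (isSuccLimit_unionBelow_len hlim (hlen.mono (Iio_subset_Iio hl.le))) fun a ha => ?_
    obtain ⟨j, hj, haj⟩ := exists_lt_len_of_lt_unionBelow_len ha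
    have hj' : succ j < l := hlim.succ_lt hj
    obtain ⟨hu, hBu, husplit⟩ :=
      hT.splitExt_spec (hT.unionBelow_fusionSeq_mem hκ hX (hj'.trans hl))
    obtain ⟨hext, hlt, -⟩ := hT.splitExt_ext_fusionSeq hκ hX (hj'.trans hl)
    have hcB := ext_unionBelow (hg.mono hl.le) hj'
    exact ⟨_, hu, husplit, hext.trans hcB, haj.le.trans
      ((len_le_unionBelow_len (lt_succ j)).trans hBu.1), hlt.trans_le hcB.1⟩
  have hmark : fusionMark κ T X l = (unionBelow c l).len := by
    rw [fusionMark, splitExt_of_splitting hsplit]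
  refine ⟨?_, fun b hb => ?_⟩
  · rintro _ ⟨j, hj, rfl⟩
    exact (hT.fusionMark_strictMonoOn hκ hX (hj.trans hl) hl hj).le
  · rw [hmark]
    refine Ordinal.iSup_le fun ⟨j, hj⟩ => ?_
    exact (hT.len_fusionSeq_le_fusionMark hκ hX (lt_succ j) ((hlim.succ_lt hj).trans hl)).trans
      (hb ⟨succ j, hlim.succ_lt hj, rfl⟩)

end Fusion

theorem sacks_branch_avoiding_with_club_of_zeros_general (κ : Cardinal) (hreg : κ.IsRegular)
    (T : Set PreSeq2) (hT : IsSacks κ T)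
    (X : Ordinal → Set (Ordinal → Bool))
    (hX : ∀ i < κ.ord, ∀ s ∈ T, ∃ t ∈ T, PreSeq2.Ext s t ∧
      Branches2 κ (up2 T t) ∩ X i = ∅) :
    ∃ x ∈ Branches2 κ T, (∀ i < κ.ord, x ∉ X i) ∧
      ∃ c, IsClubIn c κ.ord ∧ ∀ α ∈ c, x α = false := by
  obtain ⟨hmem, hchain, hlen⟩ := hT.fusionSeq_spec hreg hX
  have hx := hT.unionBelow_val_mem_branches2 hchain hlen hmem
  refine ⟨_, hx, fun i hi hxi => ?_, _,
    isClubIn_image_Iio_s8 (hT.fusionMark_strictMonoOn hreg hX)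
      (fun i hi => hT.fusionMark_lt_ord hreg hX hi) fun l hl => hT.isLUB_fusionMark hreg hX hl,
    ?_⟩
  · have hxi' := mem_branches2_up2 hx
      ((ext_unionBelow hchain hi).restrictFn2_len (hT.canonical (hmem i hi)))
    exact eq_empty_iff_forall_notMem.1 (hT.fusionSeq_avoids hreg hX hi) _ ⟨hxi', hxi⟩
  · rintro _ ⟨i, hi, rfl⟩
    obtain ⟨-, hlt, hzero⟩ := hT.splitExt_ext_fusionSeq hreg hX hi
    exact (unionBelow_val hchain hi hlt).trans hzero

/-- Fusion through a κ-Sacks tree avoiding κ-many "avoidable" sets, producing a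
branch whose `0`-set contains a club. -/
theorem sacks_branch_avoiding_with_club_of_zeros (κ : Cardinal) (hreg : κ.IsRegular)
    (hunc : Cardinal.aleph0 < κ) (T : Set PreSeq2) (hT : IsSacks κ T)
    (X : Ordinal → Set (Ordinal → Bool))
    (hX : ∀ i < κ.ord, ∀ s ∈ T, ∃ t ∈ T, PreSeq2.Ext s t ∧
      Branches2 κ (up2 T t) ∩ X i = ∅) :
    ∃ x ∈ Branches2 κ T, (∀ i < κ.ord, x ∉ X i) ∧
      ∃ c, IsClubIn c κ.ord ∧ ∀ α ∈ c, x α = false :=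
  sacks_branch_avoiding_with_club_of_zeros_general κ hreg T hT X hX
end
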